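/- Let h : Σ_s* → Σ_e* be a synchronizing q-uniform morphism (q ≥ 1), and let 1 < α < β < 2 be rationals and p a positive integer. If h(w) is (β⁺, p)-free for every α⁺-free word w with |w| < max{2β/(β−α), 2(q−1)(2β−1)/(q(β−1))}, then h(t) is (β⁺, p)-free for every (finite or infinite) α⁺-free word t. -/

import Mathlib

def HasPeriod {A : Type*} (w : List A) (p : ℕ) : Prop :=
  1 ≤ p ∧ ∀ i, i + p < w.length → w[i]? = w[i + p]?

noncomputable def period {A : Type*} (w : List A) : ℕ :=
  sInf {p | HasPeriod w p}

noncomputable def exponent {A : Type*} (w : List A) : ℚ :=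
  (w.length : ℚ) / (period w : ℚ)

/-- `w` is a finite factor of the infinite word `f`. -/
def FactorOf {A : Type*} (w : List A) (f : ℕ → A) : Prop :=
  ∃ i, w = (List.range w.length).map (fun k => f (i + k))

/-!
Suppose `h(t)` contains a factor `x` of period `P ≥ p` and exponent `> β`. Cover `x` by the image
of a factor `W` of `t`, overhanging `x` by less than a block on each side. If `x` contains a full
block together with its copy `P` letters later, synchronization forces `q ∣ P`, so the full blocks
of `x` pull back to a repetition of period `P / q` in `t`; as `t` is `α⁺`-free this caps `|x|`,
whence `|W| < 2β/(β-α)`. Otherwise `|x| < P + 2q`, which together with `|x| > βP` gives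
`|W| < 2(q-1)(2β-1)/(q(β-1))`. Either way `W` is a short `α⁺`-free word, and the hypothesis on
short words contradicts the exponent of `x`. Infinite words are handled through their prefixes.
-/

section Words

variable {A : Type*}

lemma hasPeriod_length_succ (w : List A) : HasPeriod w (w.length + 1) :=
  ⟨by omega, fun _ hi => absurd hi (by omega)⟩

lemma hasPeriod_period (w : List A) : HasPeriod w (period w) :=
  Nat.sInf_mem (s := {p | HasPeriod w p}) ⟨w.length + 1, hasPeriod_length_succ w⟩

lemma one_le_period (w : List A) : 1 ≤ period w := (hasPeriod_period w).1

lemma period_le {w : List A} {p : ℕ} (hp : HasPeriod w p) : period w ≤ p := Nat.sInf_le hp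

lemma lt_exponent_iff {w : List A} {β : ℚ} : β < exponent w ↔ β * period w < w.length :=
  lt_div_iff₀ (by exact_mod_cast one_le_period w)

lemma HasPeriod.lt_exponent {w : List A} {p : ℕ} (hw : HasPeriod w p) {α : ℚ} (hα : 0 ≤ α)
    (hlt : α * p < w.length) : α < exponent w := by
  refine lt_exponent_iff.2 (lt_of_le_of_lt ?_ hlt)
  exact mul_le_mul_of_nonneg_left (by exact_mod_cast period_le hw) hα

lemma HasPeriod.take {w : List A} {p : ℕ} (hw : HasPeriod w p) (n : ℕ) :
    HasPeriod (w.take n) p := by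
  refine ⟨hw.1, fun i hi => ?_⟩
  simp only [List.length_take] at hi
  rw [List.getElem?_take_of_lt (by omega), List.getElem?_take_of_lt (by omega)]
  exact hw.2 i (by omega)

lemma HasPeriod.drop {w : List A} {p : ℕ} (hw : HasPeriod w p) (n : ℕ) :
    HasPeriod (w.drop n) p := by
  refine ⟨hw.1, fun i hi => ?_⟩
  simp only [List.length_drop] at hi
  rw [List.getElem?_drop, List.getElem?_drop, ← Nat.add_assoc]
  exact hw.2 (n + i) (by omega)

lemma HasPeriod.take_drop_add {w : List A} {p : ℕ} (hw : HasPeriod w p) {i n : ℕ}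
    (hin : i + n + p ≤ w.length) : (w.drop (i + p)).take n = (w.drop i).take n := by
  refine List.ext_getElem? fun k => ?_
  rcases lt_or_ge k n with hk | hk
  · rw [List.getElem?_take_of_lt hk, List.getElem?_take_of_lt hk, List.getElem?_drop,
      List.getElem?_drop, hw.2 (i + k) (by omega)]
    congr 1
    omega
  · rw [List.getElem?_take_eq_none hk, List.getElem?_take_eq_none hk]

/-- The paper's `α⁺`-freeness. -/
def PlusFree (α : ℚ) (t : List A) : Prop :=
  ∀ v, v ≠ [] → v <:+: t → exponent v ≤ α

/-- The paper's `(β⁺, p)`-freeness. -/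
def PeriodPlusFree (β : ℚ) (p : ℕ) (u : List A) : Prop :=
  ∀ x, x ≠ [] → x <:+: u → p ≤ period x → exponent x ≤ β

lemma PlusFree.mono {α : ℚ} {t w : List A} (ht : PlusFree α t) (hw : w <:+: t) :
    PlusFree α w :=
  fun v hv hvw => ht v hv (hvw.trans hw)

lemma factorOf_of_infix_map_range {t : ℕ → A} {v : List A} {m : ℕ}
    (hv : v <:+: (List.range m).map t) : FactorOf v t := by
  obtain ⟨k, hk, hget⟩ := List.infix_iff_getElem?.1 hv
  refine ⟨k, List.ext_getElem (by simp) fun i hi _ => ?_⟩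
  have := hget i hi
  simp only [List.length_map, List.length_range] at hk
  rw [List.getElem?_map, List.getElem?_range (by omega)] at this
  simp only [Option.map_some, Option.some.injEq] at this
  simp [← this, Nat.add_comm k i]

lemma plusFree_map_range {α : ℚ} {t : ℕ → A}
    (ht : ∀ v : List A, v ≠ [] → FactorOf v t → exponent v ≤ α) (m : ℕ) :
    PlusFree α ((List.range m).map t) :=
  fun v hv0 hv => ht v hv0 (factorOf_of_infix_map_range hv)

end Words

def syncBound (q : ℕ) (α β : ℚ) : ℚ :=
  max (2 * β / (β - α)) (2 * ((q : ℚ) - 1) * (2 * β - 1) / (q * (β - 1)))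

lemma lt_syncBound_of_aligned {q : ℕ} {α β N n P : ℚ} (hα : 0 < α) (hαβ : α < β)
    (hN : N ≤ n + 2) (hn : n ≤ α * P) (hP : β * P < n + 2) : N < syncBound q α β := by
  have hshort : (β - α) * P < 2 := by linarith
  refine lt_max_of_lt_left ((lt_div_iff₀ (sub_pos.2 hαβ)).2 ?_)
  nlinarith [mul_lt_mul_of_pos_left hshort hα]

lemma lt_syncBound_of_unaligned {q : ℕ} {α β N P L : ℚ} (hβ : 1 < β) (hP0 : 0 < P)
    (hN : q * N + 2 ≤ P + 3 * q) (hL : L + 2 ≤ P + 2 * q) (hP : β * P < L) :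
    N < syncBound q α β := by
  have hq : (2 : ℚ) ≤ q := by
    have : 1 < q := by exact_mod_cast (show (1 : ℚ) < q by nlinarith)
    exact_mod_cast this
  refine lt_max_of_lt_right ((lt_div_iff₀ (by nlinarith)).2 ?_)
  nlinarith [mul_le_mul_of_nonneg_right hN (sub_pos.2 hβ).le]

section Morphisms

variable {σs σe : Type*} {q : ℕ} {h : σs → List σe}

lemma length_flatten_map_of_length_eq (huni : ∀ a, (h a).length = q) (t : List σs) :
    ((t.map h).flatten).length = q * t.length := by
  induction t with
  | nil => simp
  | cons a t ih =>
    simp only [List.map_cons, List.flatten_cons, List.length_append, ih, huni, List.length_cons]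
    ring

lemma take_mul_flatten_map (huni : ∀ a, (h a).length = q) (t : List σs) (k : ℕ) :
    ((t.map h).flatten).take (q * k) = ((t.take k).map h).flatten := by
  induction t generalizing k with
  | nil => simp
  | cons a t ih =>
    cases k with
    | zero => simp
    | succ k => simp [List.take_append, huni, ih, Nat.mul_succ]

lemma drop_mul_flatten_map (huni : ∀ a, (h a).length = q) (t : List σs) (k : ℕ) :
    ((t.map h).flatten).drop (q * k) = ((t.drop k).map h).flatten := by
  induction t generalizing k with
  | nil => simp
  | cons a t ih =>
    cases k with
    | zero => simp
    | succ k => simp [List.drop_append, huni, ih, Nat.mul_succ]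

lemma take_drop_mul_flatten_map (huni : ∀ a, (h a).length = q) {t : List σs} {k : ℕ}
    (hk : k < t.length) : (((t.map h).flatten).drop (q * k)).take q = h t[k] := by
  rw [drop_mul_flatten_map huni, List.drop_eq_getElem_cons hk, List.map_cons,
    List.flatten_cons, List.take_left' (huni _)]

lemma hasPeriod_of_hasPeriod_flatten_map (hinj : Function.Injective h)
    (huni : ∀ a, (h a).length = q) {v : List σs} {P : ℕ}
    (hv : HasPeriod ((v.map h).flatten) (q * P)) : HasPeriod v P := by
  refine ⟨Nat.pos_of_mul_pos_left hv.1, fun i hi => ?_⟩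
  rw [List.getElem?_eq_getElem (by omega), List.getElem?_eq_getElem hi]
  congr 1
  apply hinj
  have hfits : q * i + q + q * P ≤ ((v.map h).flatten).length := by
    rw [length_flatten_map_of_length_eq huni]
    calc q * i + q + q * P = q * (i + P + 1) := by ring
      _ ≤ q * v.length := Nat.mul_le_mul_left _ hi
  rw [← take_drop_mul_flatten_map huni, ← take_drop_mul_flatten_map huni, Nat.mul_add,
    hv.take_drop_add hfits]

/-- The image of `W` overhangs `x` by `d < q` letters on the left and by fewer than `q` on the
right. -/
lemma exists_cover_of_infix_flatten_map (hq : 0 < q) (huni : ∀ a, (h a).length = q)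
    {t : List σs} {x : List σe} (hx : x <:+: (t.map h).flatten) :
    ∃ W, W <:+: t ∧ ∃ d < q,
      (((W.map h).flatten).drop d).take x.length = x ∧ q * W.length < d + x.length + q := by
  obtain ⟨u, w, hJ⟩ := hx
  set s := u.length
  set K0 := s / q
  set K1 := (s + x.length + (q - 1)) / q
  have hK0 : q * K0 + s % q = s := Nat.div_add_mod s q
  have hK1le : q * K1 ≤ s + x.length + (q - 1) := Nat.mul_div_le _ _
  have hK1ge : s + x.length ≤ q * K1 := by
    have : s + x.length + (q - 1) < q * K1 + q := Nat.lt_mul_div_succ _ hq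
    omega
  refine ⟨(t.take K1).drop K0,
    (List.drop_suffix _ _).isInfix.trans (List.take_prefix _ _).isInfix, s % q, Nat.mod_lt _ hq,
    ?_, ?_⟩
  · rw [← drop_mul_flatten_map huni, ← take_mul_flatten_map huni, List.drop_drop, hK0,
      List.drop_take, List.take_take, min_eq_left (by omega), ← hJ, List.append_assoc,
      List.drop_left, List.take_left]
  · have hlen : ((t.take K1).drop K0).length ≤ K1 - K0 := by
      simp only [List.length_drop, List.length_take]; omega
    have := Nat.mul_le_mul_left q hlen
    rw [Nat.mul_sub] at this
    omega

def IsSynchronizing (h : σs → List σe) : Prop :=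
  ∀ (a b c : σs) (v w : List σe),
    h a ++ h b = v ++ h c ++ w → (v = [] ∧ a = c) ∨ (w = [] ∧ b = c)

lemma IsSynchronizing.injective (hs : IsSynchronizing h) : Function.Injective h := by
  intro a c hac
  rcases hs a a c [] (h a) (by rw [hac]; simp) with ⟨-, rfl⟩ | ⟨-, rfl⟩ <;> rfl

lemma IsSynchronizing.eq_nil_of_append_eq (hs : IsSynchronizing h)
    (huni : ∀ a, (h a).length = q) {a b c : σs} {u w z : List σe}
    (heq : h a ++ h b ++ z = u ++ h c ++ w) (hu : u.length < q) : u = [] := by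
  have hpre : u ++ h c <+: h a ++ h b :=
    List.prefix_of_prefix_length_le (heq ▸ List.prefix_append (u ++ h c) w)
      (List.prefix_append _ _) (by simp only [List.length_append, huni]; omega)
  obtain ⟨r, hr⟩ := hpre
  rcases hs a b c u r hr.symm with ⟨hu0, -⟩ | ⟨rfl, -⟩
  · exact hu0
  · have := congrArg List.length hr
    simp only [List.length_append, huni, List.length_nil] at this
    omega

lemma IsSynchronizing.dvd_length (hs : IsSynchronizing h) (huni : ∀ a, (h a).length = q)
    {t : List σs} {u w : List σe} {c : σs} (heq : (t.map h).flatten = u ++ h c ++ w) :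
    q ∣ u.length := by
  induction t generalizing u with
  | nil =>
    have := congrArg List.length heq
    simp only [List.map_nil, List.flatten_nil, List.length_nil, List.length_append] at this
    simp [show u.length = 0 by omega]
  | cons a t ih =>
    have heq' := heq
    rw [List.map_cons, List.flatten_cons, List.append_assoc] at heq'
    rcases List.append_eq_append_iff.1 heq' with ⟨u', rfl, hrest⟩ | ⟨v, hav, hcw⟩
    · rw [List.length_append, huni]
      exact Nat.dvd_add_self_left.2 (ih (by rw [hrest, List.append_assoc]))
    · have hlen := congrArg List.length hav
      rw [List.length_append, huni] at hlen
      rcases Nat.lt_or_ge u.length q with hu | hu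
      · cases t with
        | nil =>
          have := congrArg List.length hcw
          simp only [List.map_nil, List.flatten_nil, List.append_nil, List.length_append,
            huni] at this
          simp [show u.length = 0 by omega]
        | cons b t =>
          rw [hs.eq_nil_of_append_eq huni (by simpa using heq) hu]
          exact dvd_zero q
      · rw [show u.length = q by omega]

lemma IsSynchronizing.dvd_of_hasPeriod (hs : IsSynchronizing h) (huni : ∀ a, (h a).length = q)
    {t : List σs} {y : List σe} {P : ℕ} (hy : y <+: (t.map h).flatten) (hP : HasPeriod y P)
    (hPq : P + q ≤ y.length) : q ∣ P := by
  obtain ⟨z, hz⟩ := hy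
  cases t with
  | nil =>
    rw [List.map_nil, List.flatten_nil, List.append_eq_nil_iff] at hz
    rw [hz.1, List.length_nil] at hPq
    exact absurd hP.1 (by omega)
  | cons a t =>
    have hhead : y.take q = h a := by
      rw [← List.take_append_of_le_length (l₂ := z) (by omega), hz, List.map_cons,
        List.flatten_cons, List.take_left' (huni a)]
    have hcopy : (y.drop P).take q = h a := by
      rw [← hhead, ← List.drop_zero (l := y), ← Nat.zero_add P]
      exact hP.take_drop_add (by omega)
    have hsplit : ((a :: t).map h).flatten = y.take P ++ h a ++ ((y.drop P).drop q ++ z) := by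
      rw [← hz, ← hcopy, List.append_assoc, ← List.append_assoc _ _ z, List.take_append_drop,
        ← List.append_assoc, List.take_append_drop]
    simpa [show min P y.length = P by omega] using hs.dvd_length huni hsplit

/-- Synchronization makes the period of `y` a multiple `q P'` of the block length; the `n` full
blocks of `y` then form a repetition of period `P'` in `t`, so `α⁺`-freeness gives `n ≤ α P'`. -/
lemma IsSynchronizing.exists_period_eq_mul (hs : IsSynchronizing h)
    (huni : ∀ a, (h a).length = q) {α : ℚ} (hα : 0 ≤ α) {t : List σs} (ht : PlusFree α t)
    {y : List σe} {P : ℕ} (hy : y <+: (t.map h).flatten) (hP : HasPeriod y P)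
    (hPq : P + q ≤ y.length) :
    ∃ P' n : ℕ, P = q * P' ∧ y.length < q * n + q ∧ (n : ℚ) ≤ α * P' := by
  obtain ⟨P', rfl⟩ := hs.dvd_of_hasPeriod huni hy hP hPq
  have hq : 0 < q := Nat.pos_of_mul_pos_right hP.1
  set n := y.length / q
  have hqn : q * n ≤ y.length := Nat.mul_div_le _ _
  have hv : ((t.take n).map h).flatten = y.take (q * n) := by
    rw [← take_mul_flatten_map huni, List.prefix_iff_eq_take.1 hy, List.take_take,
      min_eq_left hqn]
  have hvP : HasPeriod (t.take n) P' :=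
    hasPeriod_of_hasPeriod_flatten_map hs.injective huni (hv ▸ hP.take _)
  have hn : (t.take n).length = n := by
    have hyt := hy.length_le
    rw [length_flatten_map_of_length_eq huni] at hyt
    simpa using Nat.le_of_mul_le_mul_left (hqn.trans hyt) hq
  refine ⟨P', n, rfl, by simpa [Nat.mul_add] using Nat.lt_mul_div_succ y.length hq, ?_⟩
  by_contra! hlt
  have hn0 : 0 < n := Nat.div_pos (by omega) hq
  have hne : t.take n ≠ [] := List.ne_nil_of_length_pos (by omega)
  exact (hvP.lt_exponent hα (by rwa [hn])).not_ge (ht _ hne (List.take_prefix _ _).isInfix)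

lemma IsSynchronizing.length_lt_syncBound (hs : IsSynchronizing h)
    (huni : ∀ a, (h a).length = q) {α β : ℚ} (hα : 0 < α) (hαβ : α < β) (hβ : 1 < β)
    {t : List σs} (ht : PlusFree α t) {x : List σe} {d P : ℕ} (hd : d < q)
    (hx : (((t.map h).flatten).drop d).take x.length = x)
    (hcover : q * t.length < d + x.length + q) (hP : HasPeriod x P)
    (hβP : β * P < x.length) : (t.length : ℚ) < syncBound q α β := by
  -- `a` is the distance from the start of `x` to the first block boundary inside it
  obtain ⟨a, ha, had⟩ : ∃ a < q, d + a = 0 ∨ d + a = q := by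
    rcases Nat.eq_zero_or_pos d with rfl | hd0
    · exact ⟨0, by omega, Or.inl rfl⟩
    · exact ⟨q - d, by omega, Or.inr (by omega)⟩
  obtain ⟨K0, hK0⟩ : q ∣ d + a := by
    rcases had with had | had <;> simp [had]
  by_cases hcase : P + q + a ≤ x.length
  · have hy : x.drop a <+: ((t.drop K0).map h).flatten := by
      rw [← drop_mul_flatten_map huni, ← hK0, ← List.drop_drop]
      conv_lhs => rw [← hx]
      rw [List.drop_take]
      exact List.take_prefix _ _
    obtain ⟨P', n, rfl, hyn, hnα⟩ := hs.exists_period_eq_mul huni hα.le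
      (ht.mono (List.drop_suffix _ _).isInfix) hy (hP.drop a) (by rw [List.length_drop]; omega)
    rw [List.length_drop] at hyn
    have htn : t.length ≤ n + 2 := by
      have : q * t.length < q * (n + 3) := by rw [Nat.mul_add]; omega
      have := Nat.lt_of_mul_lt_mul_left this
      omega
    have hβn : β * P' < n + 2 := by
      have hL : (x.length : ℚ) < q * (n + 2) := by
        exact_mod_cast (show x.length < q * (n + 2) by rw [Nat.mul_add]; omega)
      push_cast at hβP
      exact lt_of_mul_lt_mul_left (by linarith) (Nat.cast_nonneg q)
    exact lt_syncBound_of_aligned hα hαβ (by exact_mod_cast htn) hnα hβn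
  · have key : q * t.length + 2 ≤ P + 3 * q ∧ x.length + 2 ≤ P + 2 * q := by omega
    exact lt_syncBound_of_unaligned hβ (by exact_mod_cast hP.1) (by exact_mod_cast key.1)
      (by exact_mod_cast key.2) hβP

theorem IsSynchronizing.periodPlusFree_flatten_map (hs : IsSynchronizing h) (hq : 0 < q)
    (huni : ∀ a, (h a).length = q) {α β : ℚ} (hα : 0 < α) (hαβ : α < β) (hβ : 1 < β) {p : ℕ}
    (hcheck : ∀ w : List σs, (w.length : ℚ) < syncBound q α β → PlusFree α w →
      PeriodPlusFree β p ((w.map h).flatten))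
    {t : List σs} (ht : PlusFree α t) : PeriodPlusFree β p ((t.map h).flatten) := by
  intro x hx0 hxt hpx
  by_contra! hlt
  obtain ⟨W, hWt, d, hd, hxW, hcover⟩ := exists_cover_of_infix_flatten_map hq huni hxt
  have hW := hs.length_lt_syncBound huni hα hαβ hβ (ht.mono hWt) hd hxW hcover
    (hasPeriod_period x) (lt_exponent_iff.1 hlt)
  have hxW' : x <:+: (W.map h).flatten :=
    hxW ▸ (List.take_prefix _ _).isInfix.trans (List.drop_suffix _ _).isInfix
  exact hlt.not_ge (hcheck W hW (ht.mono hWt) x hx0 hxW' hpx)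

end Morphisms

theorem stmt16_general {σs σe : Type*} (q : ℕ) (hq : 1 ≤ q) (h : σs → List σe)
    (huni : ∀ a, (h a).length = q)
    (hsync : ∀ (a b c : σs) (v w : List σe),
      h a ++ h b = v ++ h c ++ w → (v = [] ∧ a = c) ∨ (w = [] ∧ b = c))
    (α β : ℚ) (hα : 1 < α) (hαβ : α < β)
    (p : ℕ)
    (hcheck : ∀ w : List σs,
      (w.length : ℚ) < max (2 * β / (β - α))
        (2 * (q - 1 : ℚ) * (2 * β - 1) / (q * (β - 1))) →
      (∀ v, v ≠ [] → v <:+: w → exponent v ≤ α) →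
      ∀ x : List σe, x ≠ [] → x <:+: (w.map h).flatten → p ≤ period x →
        exponent x ≤ β) :
    (∀ t : List σs, (∀ v, v ≠ [] → v <:+: t → exponent v ≤ α) →
      ∀ x : List σe, x ≠ [] → x <:+: (t.map h).flatten → p ≤ period x →
        exponent x ≤ β) ∧
    (∀ t : ℕ → σs, (∀ v : List σs, v ≠ [] → FactorOf v t → exponent v ≤ α) →
      ∀ x : List σe, x ≠ [] →
        (∃ m : ℕ, x <:+: (((List.range m).map (fun i => h (t i))).flatten)) →
        p ≤ period x → exponent x ≤ β) := by
  have hfinite : ∀ t : List σs, PlusFree α t → PeriodPlusFree β p ((t.map h).flatten) :=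
    fun t ht => IsSynchronizing.periodPlusFree_flatten_map hsync hq huni (by linarith) hαβ
      (by linarith) hcheck ht
  refine ⟨hfinite, fun t ht x hx0 ⟨m, hxm⟩ hpx => ?_⟩
  refine hfinite _ (plusFree_map_range ht m) x hx0 ?_ hpx
  rwa [List.map_map]

theorem stmt16 {σs σe : Type*} (q : ℕ) (hq : 1 ≤ q) (h : σs → List σe)
    (huni : ∀ a, (h a).length = q)
    (hsync : ∀ (a b c : σs) (v w : List σe),
      h a ++ h b = v ++ h c ++ w → (v = [] ∧ a = c) ∨ (w = [] ∧ b = c))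
    (α β : ℚ) (hα : 1 < α) (hαβ : α < β) (hβ : β < 2)
    (p : ℕ) (hp : 1 ≤ p)
    (hcheck : ∀ w : List σs,
      (w.length : ℚ) < max (2 * β / (β - α))
        (2 * (q - 1 : ℚ) * (2 * β - 1) / (q * (β - 1))) →
      (∀ v, v ≠ [] → v <:+: w → exponent v ≤ α) →
      ∀ x : List σe, x ≠ [] → x <:+: (w.map h).flatten → p ≤ period x →
        exponent x ≤ β) :
    (∀ t : List σs, (∀ v, v ≠ [] → v <:+: t → exponent v ≤ α) →
      ∀ x : List σe, x ≠ [] → x <:+: (t.map h).flatten → p ≤ period x →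
        exponent x ≤ β) ∧
    (∀ t : ℕ → σs, (∀ v : List σs, v ≠ [] → FactorOf v t → exponent v ≤ α) →
      ∀ x : List σe, x ≠ [] →
        (∃ m : ℕ, x <:+: (((List.range m).map (fun i => h (t i))).flatten)) →
        p ≤ period x → exponent x ≤ β) :=
  stmt16_general q hq h huni hsync α β hα hαβ p hcheck
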